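/- For the discrete-time linear-quadratic problem with horizon N, the linear feedback policy attains the Riccati value: if x_0 = x and the controls are chosen as u_k = −(R + B^⊤P_{N−k−1}B)^{−1}B^⊤P_{N−k−1}A x_k with x_{k+1} = Ax_k + Bu_k, then Σ_{k=0}^{N−1} ½(x_k^⊤Qx_k + u_k^⊤Ru_k) + ½x_N^⊤Q_f x_N = ½x^⊤P_N x. -/

import Mathlib

open Matrix

/-- Riccati iterates: `ric A B Q R Qf 0 = Qf` and
`ric (k+1) = Aᵀ P_k A − Aᵀ P_k B (R + Bᵀ P_k B)⁻¹ Bᵀ P_k A + Q`. -/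
noncomputable def ric {n m : ℕ} (A : Matrix (Fin n) (Fin n) ℝ) (B : Matrix (Fin n) (Fin m) ℝ)
    (Q : Matrix (Fin n) (Fin n) ℝ) (R : Matrix (Fin m) (Fin m) ℝ)
    (Qf : Matrix (Fin n) (Fin n) ℝ) : ℕ → Matrix (Fin n) (Fin n) ℝ
  | 0 => Qf
  | k + 1 =>
    Aᵀ * ric A B Q R Qf k * A -
      Aᵀ * ric A B Q R Qf k * B * (R + Bᵀ * ric A B Q R Qf k * B)⁻¹ *
        Bᵀ * ric A B Q R Qf k * A + Q

/-!
With the gain `K = (R + BᵀPB)⁻¹BᵀPA`, completing the square turns the Riccati update into the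
closed-loop form `Q + KᵀRK + (A - BK)ᵀP(A - BK)`. This shows inductively that every `P_k` is
positive semidefinite, so all the inverses are genuine, and, evaluated at `x_k`, it says that the
stage cost at time `k` plus `x_{k+1}ᵀP_{N-k-1}x_{k+1}` equals `x_kᵀP_{N-k}x_k`. Summing over
`k < N` telescopes to the Riccati value.
-/

section Algebra

variable {ι κ α : Type*} [Fintype ι] [Fintype κ] [CommRing α]

theorem Matrix.mulVec_dotProduct_mulVec_self {η : Type*} [Fintype η] (M : Matrix η ι α)
    (P : Matrix η η α) (x : ι → α) :
    (M *ᵥ x) ⬝ᵥ P *ᵥ (M *ᵥ x) = x ⬝ᵥ (Mᵀ * P * M) *ᵥ x := by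
  rw [← mulVec_mulVec, dotProduct_mulVec, dotProduct_mulVec, vecMul_mulVec,
    vecMul_vecMul, mulVec_mulVec, dotProduct_mulVec, Matrix.mul_assoc]

theorem riccati_update_eq_closedLoop (A P Q : Matrix ι ι α) (B : Matrix ι κ α)
    (R : Matrix κ κ α) (K : Matrix κ ι α) (hK : (R + Bᵀ * P * B) * K = Bᵀ * P * A) :
    Q + Kᵀ * R * K + (A - B * K)ᵀ * P * (A - B * K) = Aᵀ * P * A - Aᵀ * P * B * K + Q := by
  have hKK : Kᵀ * (R * K) + Kᵀ * (Bᵀ * (P * (B * K))) = Kᵀ * (Bᵀ * (P * A)) := by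
    simpa only [Matrix.add_mul, Matrix.mul_add, Matrix.mul_assoc] using congrArg (Kᵀ * ·) hK
  simp only [transpose_sub, transpose_mul, Matrix.sub_mul, Matrix.mul_sub, Matrix.mul_assoc]
  rw [← sub_eq_zero, ← sub_eq_zero.mpr hKK]
  abel

theorem stageCost_add_costToGo_eq (A P Q : Matrix ι ι α) (B : Matrix ι κ α)
    (R : Matrix κ κ α) (K : Matrix κ ι α) {x : ι → α} {u : κ → α} (hu : u = -(K *ᵥ x)) :
    x ⬝ᵥ Q *ᵥ x + u ⬝ᵥ R *ᵥ u + (A *ᵥ x + B *ᵥ u) ⬝ᵥ P *ᵥ (A *ᵥ x + B *ᵥ u) =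
      x ⬝ᵥ (Q + Kᵀ * R * K + (A - B * K)ᵀ * P * (A - B * K)) *ᵥ x := by
  have hy : A *ᵥ x + B *ᵥ u = (A - B * K) *ᵥ x := by
    rw [hu, mulVec_neg, mulVec_mulVec, sub_mulVec, sub_eq_add_neg]
  rw [hy, hu, neg_dotProduct, mulVec_neg, dotProduct_neg, neg_neg,
    Matrix.mulVec_dotProduct_mulVec_self, Matrix.mulVec_dotProduct_mulVec_self,
    add_mulVec, add_mulVec, dotProduct_add, dotProduct_add]

variable [DecidableEq κ]

noncomputable def lqGain (A P : Matrix ι ι α) (B : Matrix ι κ α) (R : Matrix κ κ α) :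
    Matrix κ ι α :=
  (R + Bᵀ * P * B)⁻¹ * (Bᵀ * P * A)

theorem mul_lqGain_of_isUnit_det {A P : Matrix ι ι α} {B : Matrix ι κ α} {R : Matrix κ κ α}
    (h : IsUnit (R + Bᵀ * P * B).det) : (R + Bᵀ * P * B) * lqGain A P B R = Bᵀ * P * A :=
  mul_nonsing_inv_cancel_left _ _ h

end Algebra

theorem Matrix.PosDef.isUnit_det_add_transpose_mul_mul {ι κ : Type*} [Fintype ι] [Fintype κ]
    [DecidableEq κ] {R : Matrix κ κ ℝ} {P : Matrix ι ι ℝ} (hR : R.PosDef) (hP : P.PosSemidef)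
    (B : Matrix ι κ ℝ) : IsUnit (R + Bᵀ * P * B).det := by
  have hBPB : (Bᵀ * P * B).PosSemidef := by simpa using hP.conjTranspose_mul_mul_same B
  exact (isUnit_iff_isUnit_det _).1 (hR.add_posSemidef hBPB).isUnit

section Riccati

variable {n m : ℕ} (A : Matrix (Fin n) (Fin n) ℝ) (B : Matrix (Fin n) (Fin m) ℝ)
  {Q Qf : Matrix (Fin n) (Fin n) ℝ} {R : Matrix (Fin m) (Fin m) ℝ}

theorem ric_succ_eq_closedLoop {k : ℕ} (h : IsUnit (R + Bᵀ * ric A B Q R Qf k * B).det) :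
    ric A B Q R Qf (k + 1) =
      Q + (lqGain A (ric A B Q R Qf k) B R)ᵀ * R * lqGain A (ric A B Q R Qf k) B R +
        (A - B * lqGain A (ric A B Q R Qf k) B R)ᵀ * ric A B Q R Qf k *
          (A - B * lqGain A (ric A B Q R Qf k) B R) := by
  rw [riccati_update_eq_closedLoop _ _ _ _ _ _ (mul_lqGain_of_isUnit_det h), lqGain]
  simp only [ric, Matrix.mul_assoc]

theorem ric_posSemidef (hQ : Q.PosSemidef) (hQf : Qf.PosSemidef) (hR : R.PosDef) :
    ∀ k, (ric A B Q R Qf k).PosSemidef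
  | 0 => hQf
  | k + 1 => by
    have hP := ric_posSemidef hQ hQf hR k
    rw [ric_succ_eq_closedLoop A B (hR.isUnit_det_add_transpose_mul_mul hP B)]
    refine (hQ.add ?_).add ?_
    · simpa using hR.posSemidef.conjTranspose_mul_mul_same (lqGain A (ric A B Q R Qf k) B R)
    · simpa using hP.conjTranspose_mul_mul_same (A - B * lqGain A (ric A B Q R Qf k) B R)

theorem stageCost_add_ric_eq_ric_succ (hQ : Q.PosSemidef) (hQf : Qf.PosSemidef) (hR : R.PosDef)
    (k : ℕ) {x : Fin n → ℝ} {u : Fin m → ℝ} (hu : u = -(lqGain A (ric A B Q R Qf k) B R *ᵥ x)) :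
    x ⬝ᵥ Q *ᵥ x + u ⬝ᵥ R *ᵥ u + (A *ᵥ x + B *ᵥ u) ⬝ᵥ ric A B Q R Qf k *ᵥ (A *ᵥ x + B *ᵥ u) =
      x ⬝ᵥ ric A B Q R Qf (k + 1) *ᵥ x := by
  rw [stageCost_add_costToGo_eq _ _ _ _ _ _ hu, ric_succ_eq_closedLoop A B
    (hR.isUnit_det_add_transpose_mul_mul (ric_posSemidef A B hQ hQf hR k) B)]

end Riccati

/-- The Riccati linear feedback policy attains the Riccati value `½xᵀP_N x`:
if `x_0 = x`, `x_{k+1} = A x_k + B u_k`, and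
`u_k = −(R + Bᵀ P_{N−k−1} B)⁻¹ Bᵀ P_{N−k−1} A x_k` for `k < N`, then
`Σ_{k<N} ½(x_kᵀQx_k + u_kᵀRu_k) + ½x_NᵀQ_f x_N = ½xᵀP_N x`. -/
theorem lq_feedback_attains_riccati_value {n m : ℕ}
    (A : Matrix (Fin n) (Fin n) ℝ) (B : Matrix (Fin n) (Fin m) ℝ)
    (Q Qf : Matrix (Fin n) (Fin n) ℝ) (R : Matrix (Fin m) (Fin m) ℝ)
    (hQ : Q.PosSemidef) (hQf : Qf.PosSemidef) (hR : R.PosDef)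
    (N : ℕ) (x : Fin n → ℝ)
    (xs : ℕ → Fin n → ℝ) (us : ℕ → Fin m → ℝ)
    (hx0 : xs 0 = x)
    (hdyn : ∀ k, xs (k + 1) = A *ᵥ xs k + B *ᵥ us k)
    (hu : ∀ k < N, us k =
      -((R + Bᵀ * ric A B Q R Qf (N - k - 1) * B)⁻¹ *ᵥ
          (Bᵀ * ric A B Q R Qf (N - k - 1) * A) *ᵥ xs k)) :
    (∑ k ∈ Finset.range N, (1 / 2) * (xs k ⬝ᵥ Q *ᵥ xs k + us k ⬝ᵥ R *ᵥ us k)) +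
      (1 / 2) * (xs N ⬝ᵥ Qf *ᵥ xs N) =
      (1 / 2) * (x ⬝ᵥ ric A B Q R Qf N *ᵥ x) := by
  set V : ℕ → ℝ := fun k => xs k ⬝ᵥ ric A B Q R Qf (N - k) *ᵥ xs k with hV
  have hstep : ∀ k ∈ Finset.range N,
      (1 / 2) * (xs k ⬝ᵥ Q *ᵥ xs k + us k ⬝ᵥ R *ᵥ us k) = (1 / 2) * (V k - V (k + 1)) := by
    intro k hk
    have hk : k < N := Finset.mem_range.1 hk
    have hgain : us k = -(lqGain A (ric A B Q R Qf (N - k - 1)) B R *ᵥ xs k) := by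
      rw [lqGain, ← mulVec_mulVec]; exact hu k hk
    have hvalue := stageCost_add_ric_eq_ric_succ A B hQ hQf hR (N - k - 1) hgain
    rw [← hdyn, show N - k - 1 + 1 = N - k by omega] at hvalue
    simp only [hV, show N - (k + 1) = N - k - 1 by omega]
    rw [← hvalue]
    ring
  rw [Finset.sum_congr rfl hstep, ← Finset.mul_sum, Finset.sum_range_sub']
  simp only [hV, Nat.sub_zero, Nat.sub_self, hx0, ric]
  ring
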